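/- For any ℓ ∈ (ℤ/kℤ)ˣ with inverse ℓ̄, let T_a = [[1,1],[0,1]] and T_b = [[1,0],[−1,1]] be elementary matrices in SL(2, ℤ/kℤ); then the product T_b^{ℓ̄−1} · T_a^{−1} · T_b^{ℓ−1} lies in the subgroup of matrices with c = 0, and its image under the homomorphism [[a,b],[c,d]] ↦ d on that subgroup equals ℓ̄. -/

import Mathlib

open Matrix

lemma aux_zpow {k : ℕ} (Tb : Matrix.SpecialLinearGroup (Fin 2) (ZMod k))
    (hTb : (Tb : Matrix (Fin 2) (Fin 2) (ZMod k)) = !![1, 0; -1, 1]) (n : ℤ) :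
    ((Tb ^ n : Matrix.SpecialLinearGroup (Fin 2) (ZMod k)) : Matrix (Fin 2) (Fin 2) (ZMod k))
      = !![1, 0; -(n : ZMod k), 1] := by
  induction n using Int.induction_on with
  | zero => simp [Matrix.one_fin_two]
  | succ n ih =>
      rw [_root_.zpow_add_one, Matrix.SpecialLinearGroup.coe_mul, ih, hTb]
      push_cast
      ext i j
      fin_cases i <;> fin_cases j <;> simp [Matrix.mul_apply, Fin.sum_univ_two] <;> ring
  | pred n ih =>
      rw [_root_.zpow_sub_one, Matrix.SpecialLinearGroup.coe_mul, ih,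
        Matrix.SpecialLinearGroup.coe_inv, hTb, Matrix.adjugate_fin_two]
      push_cast
      ext i j
      fin_cases i <;> fin_cases j <;> simp [Matrix.mul_apply, Fin.sum_univ_two] <;> ring

/-- in SL(2, ℤ/kℤ), with T_a = [[1,1],[0,1]] and T_b = [[1,0],[−1,1]],
for any unit ℓ mod k with inverse ℓ̄, the matrix φ_ℓ = T_b^{ℓ̄−1}·T_a⁻¹·T_b^{ℓ−1}
has lower-left entry 0 and (2,2) entry ℓ̄ (the image of φ_ℓ under [[a,b],[c,d]] ↦ d). -/
theorem stmt_14 (k : ℕ) (hk : 2 ≤ k)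
    (Ta Tb : Matrix.SpecialLinearGroup (Fin 2) (ZMod k))
    (hTa : (Ta : Matrix (Fin 2) (Fin 2) (ZMod k)) = !![1, 1; 0, 1])
    (hTb : (Tb : Matrix (Fin 2) (Fin 2) (ZMod k)) = !![1, 0; -1, 1])
    (l lb : ℤ) (hl : ((l : ZMod k)) * ((lb : ZMod k)) = 1) :
    let φ : Matrix.SpecialLinearGroup (Fin 2) (ZMod k) :=
      Tb ^ (lb - 1) * Ta⁻¹ * Tb ^ (l - 1)
    (φ : Matrix (Fin 2) (Fin 2) (ZMod k)) 1 0 = 0 ∧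
    (φ : Matrix (Fin 2) (Fin 2) (ZMod k)) 1 1 = (lb : ZMod k) := by
  intro φ
  have hφ : (φ : Matrix (Fin 2) (Fin 2) (ZMod k)) =
      !![1, 0; -((lb - 1 : ℤ) : ZMod k), 1] * !![1, -1; 0, 1] *
        !![1, 0; -((l - 1 : ℤ) : ZMod k), 1] := by
    show ((Tb ^ (lb - 1) * Ta⁻¹ * Tb ^ (l - 1) :
        Matrix.SpecialLinearGroup (Fin 2) (ZMod k)) : Matrix (Fin 2) (Fin 2) (ZMod k)) = _
    rw [Matrix.SpecialLinearGroup.coe_mul, Matrix.SpecialLinearGroup.coe_mul,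
      aux_zpow Tb hTb, aux_zpow Tb hTb, Matrix.SpecialLinearGroup.coe_inv, hTa,
      Matrix.adjugate_fin_two]
    norm_num
  rw [hφ]
  push_cast
  constructor
  · simp [Matrix.mul_apply, Fin.sum_univ_two]
    linear_combination -hl
  · simp [Matrix.mul_apply, Fin.sum_univ_two]
    try linear_combination -hl
    try linear_combination -2*hl
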